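/- Let (X,d) be a metric space, (γ_n) a sequence of positive reals, and (T_n) a family of self-maps of X that is jointly (P₂) with respect to (γ_n). Then for all m, n ∈ ℕ and all w ∈ X: d(T_n w, T_m w) ≤ (|γ_n − γ_m|/γ_n)·d(w, T_n w). -/

import Mathlib

/-!
Putting `x = y = w` in the joint (P₂) inequality gives, with `a = d(w, Tₙw)`, `b = d(w, Tₘw)` and
`c = d(Tₙw, Tₘw)`, the relation `c² (γₙ + γₘ) ≤ (b² - a²)(γₘ - γₙ)`. The triangle inequality
confines `b` to `[|a - c|, a + c]`, so `(b² - a²)(γₘ - γₙ) ≤ (2ac ± c²)|γₙ - γₘ|` with the sign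
of `γₘ - γₙ`; the `c²` terms then cancel against the left-hand side and leave `γₙ c ≤ |γₙ - γₘ| a`.
-/

/-- The joint (P₂) condition for a family of self-maps of a metric space
with respect to a sequence of positive reals. -/
def JointlyP2 {X : Type*} [MetricSpace X] (T : ℕ → X → X) (γ : ℕ → ℝ) : Prop :=
  ∀ n m : ℕ, ∀ x y : X,
    (1 / γ m) * (dist (T n x) (T m y) ^ 2 + dist y (T m y) ^ 2 - dist y (T n x) ^ 2) ≤
    (1 / γ n) * (dist x (T m y) ^ 2 - dist x (T n x) ^ 2 - dist (T n x) (T m y) ^ 2)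

theorem mul_le_abs_sub_mul_of_sq_mul_add_le {a b c s t : ℝ}
    (hb : b ≤ a + c) (ha : a ≤ b + c) (hc : c ≤ a + b)
    (h : c ^ 2 * (s + t) ≤ (b ^ 2 - a ^ 2) * (t - s)) :
    s * c ≤ |s - t| * a := by
  rcases (show 0 ≤ c by linarith).eq_or_lt with rfl | hc_pos
  · simpa using mul_nonneg (abs_nonneg (s - t)) (show 0 ≤ a by linarith)
  refine le_of_mul_le_mul_left ?_ hc_pos
  rcases le_total s t with hst | hts
  · rw [abs_of_nonpos (sub_nonpos.2 hst)]
    have hb_sq : b ^ 2 - a ^ 2 ≤ c * (2 * a + c) := by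
      nlinarith [mul_nonneg (sub_nonneg.2 hb) (show 0 ≤ a + c + b by linarith)]
    linarith [mul_le_mul_of_nonneg_right hb_sq (sub_nonneg.2 hst)]
  · rw [abs_of_nonneg (sub_nonneg.2 hts)]
    have hb_sq : a ^ 2 - b ^ 2 ≤ c * (2 * a - c) := by
      nlinarith [mul_nonneg (show 0 ≤ b - a + c by linarith) (show 0 ≤ b + a - c by linarith)]
    linarith [mul_le_mul_of_nonneg_right hb_sq (sub_nonneg.2 hts)]

namespace JointlyP2

variable {X : Type*} [MetricSpace X] {T : ℕ → X → X} {γ : ℕ → ℝ}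

theorem sq_dist_mul_add_le (hγ : ∀ n, 0 < γ n) (hT : JointlyP2 T γ) (n m : ℕ) (w : X) :
    dist (T n w) (T m w) ^ 2 * (γ n + γ m) ≤
      (dist w (T m w) ^ 2 - dist w (T n w) ^ 2) * (γ m - γ n) := by
  have h := hT n m w w
  rw [one_div_mul_eq_div, one_div_mul_eq_div, div_le_div_iff₀ (hγ m) (hγ n)] at h
  linarith

end JointlyP2

theorem stmt13
    {X : Type*} [MetricSpace X]
    (γ : ℕ → ℝ) (hγ : ∀ n, 0 < γ n)
    (T : ℕ → X → X) (hJP2 : JointlyP2 T γ) :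
    ∀ m n : ℕ, ∀ w : X,
      dist (T n w) (T m w) ≤ (|γ n - γ m| / γ n) * dist w (T n w) := by
  intro m n w
  have key : γ n * dist (T n w) (T m w) ≤ |γ n - γ m| * dist w (T n w) :=
    mul_le_abs_sub_mul_of_sq_mul_add_le (dist_triangle _ _ _) (dist_triangle_right _ _ _)
      (dist_triangle_left _ _ _) (hJP2.sq_dist_mul_add_le hγ n m w)
  rw [div_mul_eq_mul_div, le_div_iff₀ (hγ n)]
  linarith
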